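/- Let A → B be a surjection of rings whose kernel I satisfies I² = 0 and is annihilated by a maximal ideal m of A such that A/m has characteristic prime to the order of a finite group G. Then for n ≥ 1, the map Hⁿ(G, A^×) → Hⁿ(G, B^×) is an isomorphism, where G acts trivially. -/

import Mathlib

open CategoryTheory

/-- The map of inhomogeneous cochain complexes induced by a morphism of representations,
given by postcomposition. -/
noncomputable def cochainsMap {k G : Type} [CommRing k] [Group G]
    {A B : Rep k G} (f : A ⟶ B) :
    groupCohomology.inhomogeneousCochains A ⟶ groupCohomology.inhomogeneousCochains B where
  f n := ModuleCat.ofHom ((f.hom.toLinearMap : A →ₗ[k] B).compLeft (Fin n → G))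
  comm' i j hij := by
    obtain rfl : i + 1 = j := hij
    rw [groupCohomology.inhomogeneousCochains.d_def, groupCohomology.inhomogeneousCochains.d_def]
    ext (x : (Fin i → G) → A) g
    simp [inhomogeneousCochains.d_hom_apply, Rep.hom_comm_apply, Function.comp_def]

/-- The map on group cohomology induced by a morphism of representations. -/
noncomputable def groupCohomologyMap {k G : Type} [CommRing k] [Group G]
    {A B : Rep k G} (f : A ⟶ B) (n : ℕ) :
    groupCohomology A n ⟶ groupCohomology B n :=
  HomologicalComplex.homologyMap (cochainsMap f) n

/-- The morphism of trivial representations induced by a linear map. -/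
def trivialRepHom {k G : Type} [CommRing k] [Group G]
    {M N : Type} [AddCommGroup M] [Module k M] [AddCommGroup N] [Module k N]
    (f : M →ₗ[k] N) : Rep.trivial k G M ⟶ Rep.trivial k G N :=
  Rep.ofHom ⟨f, fun _ => rfl⟩

/-- The `ℤ`-linear map on (additivized) unit groups induced by a ring homomorphism. -/
def unitsMapLinear {A B : Type} [CommRing A] [CommRing B] (f : A →+* B) :
    Additive Aˣ →ₗ[ℤ] Additive Bˣ :=
  (MonoidHom.toAdditive (Units.map (f : A →* B))).toIntLinearMap

/-! Since `I := ker f` is square-zero, `i ↦ 1 + i` identifies `I` with the kernel of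
`A^× → B^×`, and this map is onto because `I` is nil; so `0 → I → A^× → B^× → 0` is a short
exact sequence of trivial `G`-modules. As `m` kills `I`, it is a vector space over the field
`A/m`, where `|G|` is invertible; by Maschke every `A/m`-linear representation of `G` is then
projective, so `Hⁿ(G, I)` vanishes for `n ≥ 1` (the inhomogeneous cochains over `A/m` and over
`ℤ` are the same complex). The long exact sequence finishes the proof. -/

open Limits

namespace Ideal

variable {A : Type*} [CommRing A] {I : Ideal A}

lemma mul_eq_zero_of_mul_self_eq_bot (hI : I * I = ⊥) {x y : A} (hx : x ∈ I) (hy : y ∈ I) :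
    x * y = 0 := by
  simpa [hI] using mul_mem_mul hx hy

def onePlusUnits (hI : I * I = ⊥) : I →+ Additive Aˣ where
  toFun i := .ofMul (Units.mkOfMulEqOne (1 + i) (1 - i) <| by
    linear_combination -mul_eq_zero_of_mul_self_eq_bot hI i.2 i.2)
  map_zero' := by ext; simp
  map_add' i j := by
    ext
    change (1 : A) + (i + j) = (1 + i) * (1 + j)
    linear_combination -mul_eq_zero_of_mul_self_eq_bot hI i.2 j.2

@[simp]
lemma val_toMul_onePlusUnits (hI : I * I = ⊥) (i : I) :
    ((onePlusUnits hI i).toMul : A) = 1 + i := rfl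

lemma onePlusUnits_injective (hI : I * I = ⊥) : Function.Injective (onePlusUnits hI) :=
  fun i j h ↦ Subtype.ext <| by simpa using congr_arg (fun u ↦ (u.toMul : A)) h

end Ideal

namespace RingHom

variable {A B : Type} [CommRing A] [CommRing B] {f : A →+* B}

@[simp]
lemma val_toMul_unitsMapLinear (v : Additive Aˣ) :
    ((unitsMapLinear f v).toMul : B) = f v.toMul := rfl

lemma isUnit_of_isUnit_map (hf : Function.Surjective f) (hnil : ∀ x ∈ ker f, IsNilpotent x)
    {a : A} (ha : IsUnit (f a)) : IsUnit a := by
  obtain ⟨b, hb⟩ := hf ↑ha.unit⁻¹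
  have hab : a * b - 1 ∈ ker f := by simp [hb]
  exact isUnit_of_mul_isUnit_left (by simpa using (hnil _ hab).isUnit_add_one)

lemma unitsMapLinear_surjective (hf : Function.Surjective f)
    (hnil : ∀ x ∈ ker f, IsNilpotent x) : Function.Surjective (unitsMapLinear f) := by
  intro v
  obtain ⟨a, ha⟩ := hf (v.toMul : B)
  have hu : IsUnit a := isUnit_of_isUnit_map hf hnil (ha ▸ v.toMul.isUnit)
  exact ⟨.ofMul hu.unit, Additive.toMul.injective (Units.ext ha)⟩

lemma exact_onePlusUnits_unitsMapLinear (hsq : ker f * ker f = ⊥) :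
    Function.Exact (Ideal.onePlusUnits hsq) (unitsMapLinear f) := by
  intro v
  constructor
  · intro hv
    have : f (v.toMul : A) = 1 := by simpa using congr_arg (fun u ↦ (u.toMul : B)) hv
    refine ⟨⟨(v.toMul : A) - 1, by simp [this]⟩, Additive.toMul.injective (Units.ext ?_)⟩
    simp
  · rintro ⟨i, rfl⟩
    refine Additive.toMul.injective (Units.ext ?_)
    simpa using mem_ker.1 i.2

end RingHom

lemma groupCohomologyMap_eq_functor_map {k G : Type} [CommRing k] [Group G] {A B : Rep k G}
    (φ : A ⟶ B) (n : ℕ) :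
    groupCohomologyMap φ n = (groupCohomology.functor k G n).map φ := rfl

lemma shortExact_trivialRepHom {k G : Type} [CommRing k] [Group G]
    {M N P : Type} [AddCommGroup M] [Module k M] [AddCommGroup N] [Module k N]
    [AddCommGroup P] [Module k P] {φ : M →ₗ[k] N} {ψ : N →ₗ[k] P}
    (hexact : Function.Exact φ ψ) (hφ : Function.Injective φ) (hψ : Function.Surjective ψ) :
    (ShortComplex.mk (trivialRepHom (G := G) φ) (trivialRepHom ψ)
      (by ext x; exact hexact.apply_apply_eq_zero x)).ShortExact where
  exact := (forget₂ (Rep k G) (ModuleCat k)).reflects_exact_of_faithful _ <|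
    ModuleCat.shortComplex_exact _ hexact
  mono_f := (Rep.mono_iff_injective _).2 hφ
  epi_g := (Rep.epi_iff_surjective _).2 hψ

lemma groupCohomology.isIso_functor_map_g_of_isZero {k G : Type} [CommRing k] [Group G]
    {X : ShortComplex (Rep k G)} (hX : X.ShortExact) (n : ℕ)
    (h₀ : IsZero (groupCohomology X.X₁ n)) (h₁ : IsZero (groupCohomology X.X₁ (n + 1))) :
    IsIso ((groupCohomology.functor k G n).map X.g) := by
  have : Mono ((functor k G n).map X.g) := (mapShortComplex₂_exact hX n).mono_g (h₀.eq_of_src _ _)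
  have : Epi ((functor k G n).map X.g) :=
    (mapShortComplex₃_exact hX (i := n) rfl).epi_f (h₁.eq_of_tgt _ _)
  exact isIso_of_mono_of_epi _

lemma isZero_groupCohomology_succ_of_natCard_ne_zero {k G : Type} [Field k] [Group G] [Finite G]
    [NeZero (Nat.card G : k)] (V : Rep k G) (n : ℕ) :
    IsZero (groupCohomology V (n + 1)) :=
  (isZero_Ext_succ_of_projective (Rep.trivial k G k) V n).of_iso (groupCohomologyIsoExt _ _)

lemma inhomogeneousCochains.d_trivial_int_apply {k G M : Type} [CommRing k] [Group G]
    [AddCommGroup M] [Module k M] (n : ℕ) (x : (Fin n → G) → M) :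
    inhomogeneousCochains.d (Rep.trivial ℤ G M) n x =
      inhomogeneousCochains.d (Rep.trivial k G M) n x := by
  ext g
  simp [inhomogeneousCochains.d_hom_apply, ← Int.cast_smul_eq_zsmul k]

lemma isZero_groupCohomology_trivial_int_of_isZero {k G M : Type} [CommRing k] [Group G]
    [AddCommGroup M] [Module k M] (n : ℕ)
    (h : IsZero (groupCohomology (Rep.trivial k G M) (n + 1))) :
    IsZero (groupCohomology (Rep.trivial ℤ G M) (n + 1)) := by
  rw [groupCohomology, ← HomologicalComplex.exactAt_iff_isZero_homology,
    HomologicalComplex.exactAt_iff' _ n (n + 1) (n + 1 + 1) (by simp) (by simp),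
    ShortComplex.moduleCat_exact_iff] at h ⊢
  simp only [HomologicalComplex.shortComplexFunctor'_obj_f,
    HomologicalComplex.shortComplexFunctor'_obj_g, CochainComplex.of_d] at h ⊢
  intro x hx
  obtain ⟨y, hy⟩ :=
    h x ((inhomogeneousCochains.d_trivial_int_apply (k := k) (M := M) (n + 1) x).symm.trans hx)
  exact ⟨y, (inhomogeneousCochains.d_trivial_int_apply (k := k) n y).trans hy⟩

/-- Let `A → B` be a surjection of rings whose kernel `I` satisfies `I² = 0` and is
annihilated by a maximal ideal `m` of `A` such that `A/m` has characteristic prime to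
the order of a finite group `G`.  Then for `n ≥ 1`, the map
`Hⁿ(G, A^×) → Hⁿ(G, B^×)` is an isomorphism, where `G` acts trivially. -/
theorem groupCohomology_units_of_square_zero_extension_iso
    (G : Type) [Group G] [Finite G]
    (A B : Type) [CommRing A] [CommRing B]
    (f : A →+* B) (hf : Function.Surjective f)
    (hsq : RingHom.ker f * RingHom.ker f = ⊥)
    (m : Ideal A) (hm : m.IsMaximal)
    (hann : ∀ a ∈ m, ∀ x ∈ RingHom.ker f, a * x = 0)
    (hchar : (Nat.card G : A ⧸ m) ≠ 0)
    (n : ℕ) (hn : 1 ≤ n) :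
    IsIso (groupCohomologyMap (trivialRepHom (G := G) (unitsMapLinear f)) n) := by
  let : Field (A ⧸ m) := Ideal.Quotient.field m
  let : Module (A ⧸ m) (RingHom.ker f) :=
    Module.IsTorsionBySet.module fun x a ↦ Subtype.ext (hann a a.2 x x.2)
  have : NeZero (Nat.card G : A ⧸ m) := ⟨hchar⟩
  have hnil (x : A) (hx : x ∈ RingHom.ker f) : IsNilpotent x :=
    ⟨2, by simpa [sq] using Ideal.mul_eq_zero_of_mul_self_eq_bot hsq hx hx⟩
  have hX := shortExact_trivialRepHom (G := G) (φ := (Ideal.onePlusUnits hsq).toIntLinearMap)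
    (RingHom.exact_onePlusUnits_unitsMapLinear hsq) (Ideal.onePlusUnits_injective hsq)
    (RingHom.unitsMapLinear_surjective hf hnil)
  have hvanish (j : ℕ) : IsZero (groupCohomology (Rep.trivial ℤ G (RingHom.ker f)) (j + 1)) :=
    isZero_groupCohomology_trivial_int_of_isZero j
      (isZero_groupCohomology_succ_of_natCard_ne_zero (k := A ⧸ m) _ j)
  obtain ⟨n, rfl⟩ := Nat.exists_eq_add_of_le' hn
  rw [groupCohomologyMap_eq_functor_map]
  exact groupCohomology.isIso_functor_map_g_of_isZero hX _ (hvanish n) (hvanish (n + 1))
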